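/- arXiv:2209.08086 — 6 statements merged into one kernel-verified Lean document; each statement's English description precedes it below -/
import Mathlib

section
/- Let k0 > 0 and R_s, R_t ∈ SO(3) with R_s·e3 ≠ R_t·e3 and R_s·e3 ≠ −R_t·e3, and let (φ, θ, ψ) ∈ ℝ × [0,π] × ℝ be Euler angles of the relative rotation, i.e. R_sᵀR_t = Q³(φ)·Q²(θ)·Q³(ψ). Then for all β ∈ J_{s,t}: γ_{s,t}(β) = (k0/2)·sin θ·(cos β − 1)·(cos φ, sin φ) + k0·cos(θ/2)·sin β·(−sin φ, cos φ). -/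
noncomputable section
open Real Set MeasureTheory
open scoped RealInnerProductSpace

abbrev R3 : Type := EuclideanSpace ℝ (Fin 3)
abbrev R2 : Type := EuclideanSpace ℝ (Fin 2)
abbrev Mat3 : Type := Matrix (Fin 3) (Fin 3) ℝ

def SO3 (R : Mat3) : Prop := R.transpose * R = 1 ∧ R.det = 1

def e3 : R3 := WithLp.toLp 2 (![0, 0, 1] : Fin 3 → ℝ)

def act3 (R : Mat3) (x : R3) : R3 := WithLp.toLp 2 (R.mulVec x)

def cross3 (x y : R3) : R3 := WithLp.toLp 2 (crossProduct x y)

def rotE3 (R : Mat3) : R3 := act3 R e3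

def v1 (Rs Rt : Mat3) : R3 := ‖rotE3 Rs + rotE3 Rt‖⁻¹ • (rotE3 Rs + rotE3 Rt)

def v2 (Rs Rt : Mat3) : R3 :=
  ‖cross3 (rotE3 Rs) (rotE3 Rt)‖⁻¹ • cross3 (rotE3 Rs) (rotE3 Rt)

def v3 (Rs Rt : Mat3) : R3 := ‖rotE3 Rs - rotE3 Rt‖⁻¹ • (rotE3 Rs - rotE3 Rt)

def aRad (k0 : ℝ) (Rs Rt : Mat3) : ℝ := k0 / 2 * ‖rotE3 Rs + rotE3 Rt‖

def sigmaArc (k0 : ℝ) (Rs Rt : Mat3) (β : ℝ) : R3 :=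
  (aRad k0 Rs Rt * (Real.cos β - 1)) • v1 Rs Rt + (aRad k0 Rs Rt * Real.sin β) • v2 Rs Rt

def cST (Rs Rt : Mat3) : ℝ := ⟪rotE3 Rs, rotE3 Rt⟫

def Jset (Rs Rt : Mat3) : Set ℝ :=
  if cST Rs Rt ≤ 0 then Ioc (-π) π
  else Ioo (-(Real.arccos ((cST Rs Rt - 1) / (cST Rs Rt + 1))))
    (Real.arccos ((cST Rs Rt - 1) / (cST Rs Rt + 1)))

def kappa (k0 : ℝ) (k : R2) : ℝ := Real.sqrt (k0 ^ 2 - ‖k‖ ^ 2)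

def hmap (k0 : ℝ) (k : R2) : R3 := WithLp.toLp 2 (![k 0, k 1, kappa k0 k - k0] : Fin 3 → ℝ)

def ball2 (k0 : ℝ) : Set R2 := {k | ‖k‖ < k0}

def Hemi (k0 : ℝ) (R : Mat3) : Set R3 := (fun k => act3 R (hmap k0 k)) '' ball2 k0

def P2 (x : R3) : R2 := WithLp.toLp 2 (![x 0, x 1] : Fin 2 → ℝ)

def relAxis (Rs Rt : Mat3) : R3 := act3 (Rs.transpose * Rt) e3

def w1 (Rs Rt : Mat3) : R2 := ‖P2 (relAxis Rs Rt)‖⁻¹ • P2 (relAxis Rs Rt)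

def w2 (Rs Rt : Mat3) : R2 :=
  ‖P2 (cross3 e3 (relAxis Rs Rt))‖⁻¹ • P2 (cross3 e3 (relAxis Rs Rt))

def aTilde (k0 : ℝ) (Rs Rt : Mat3) : ℝ := k0 / 2 * ‖P2 (relAxis Rs Rt)‖

def gammaArc (k0 : ℝ) (Rs Rt : Mat3) (β : ℝ) : R2 :=
  (aTilde k0 Rs Rt * (Real.cos β - 1)) • w1 Rs Rt + (aRad k0 Rs Rt * Real.sin β) • w2 Rs Rt

def Q2mat (α : ℝ) : Mat3 :=
  !![Real.cos α, 0, Real.sin α; 0, 1, 0; -Real.sin α, 0, Real.cos α]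

def Q3mat (α : ℝ) : Mat3 :=
  !![Real.cos α, -Real.sin α, 0; Real.sin α, Real.cos α, 0; 0, 0, 1]

def gammaEuler (k0 φ θ β : ℝ) : R2 :=
  (k0 / 2 * Real.sin θ * (Real.cos β - 1)) • WithLp.toLp 2 (![Real.cos φ, Real.sin φ] : Fin 2 → ℝ)
    + (k0 * Real.cos (θ / 2) * Real.sin β) • WithLp.toLp 2 (![-Real.sin φ, Real.cos φ] : Fin 2 → ℝ)

/-!
The Euler factorisation gives `Rsᵀ Rt e3 = (sin θ cos φ, sin θ sin φ, cos θ)`, so the projection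
of this axis is `sin θ (cos φ, sin φ)` and that of `e3 × Rsᵀ Rt e3` is `sin θ (-sin φ, cos φ)`.
Both normalise to the stated unit vectors because `sin θ > 0`, which is exactly
`Rs e3 ≠ ±Rt e3`. Finally `Rs` is an isometry, so
`‖Rs e3 + Rt e3‖ = ‖e3 + Rsᵀ Rt e3‖ = √(2 + 2 cos θ) = 2 cos (θ / 2)`.
-/

open Matrix

lemma norm_act3_of_transpose_mul_self {A : Mat3} (hA : Aᵀ * A = 1) (v : R3) :
    ‖act3 A v‖ = ‖v‖ := by
  have hdot : A *ᵥ v ⬝ᵥ A *ᵥ v = v ⬝ᵥ v := by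
    rw [dotProduct_mulVec, ← vecMul_transpose, vecMul_vecMul, hA, vecMul_one]
  simp only [EuclideanSpace.norm_eq, Real.norm_eq_abs, sq_abs]
  simpa [act3, dotProduct, sq] using congrArg Real.sqrt hdot

lemma act3_add (A : Mat3) (x y : R3) : act3 A (x + y) = act3 A x + act3 A y := by
  simp [act3, mulVec_add]

lemma act3_neg (A : Mat3) (x : R3) : act3 A (-x) = -act3 A x := by
  simp [act3, mulVec_neg]

lemma act3_relAxis {Rs : Mat3} (hRs : Rs * Rsᵀ = 1) (Rt : Mat3) :
    act3 Rs (relAxis Rs Rt) = rotE3 Rt := by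
  simp [relAxis, rotE3, act3, mulVec_mulVec, ← Matrix.mul_assoc, hRs]

def sphDir (φ θ : ℝ) : R3 :=
  WithLp.toLp 2 ![Real.sin θ * Real.cos φ, Real.sin θ * Real.sin φ, Real.cos θ]

lemma act3_euler_e3 (φ θ ψ : ℝ) : act3 (Q3mat φ * Q2mat θ * Q3mat ψ) e3 = sphDir φ θ := by
  ext i
  fin_cases i <;> simp [act3, e3, sphDir, Q2mat, Q3mat] <;> ring

lemma sphDir_zero (φ : ℝ) : sphDir φ 0 = e3 := by
  ext i; fin_cases i <;> simp [sphDir, e3]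

lemma sphDir_pi (φ : ℝ) : sphDir φ π = -e3 := by
  ext i; fin_cases i <;> simp [sphDir, e3]

lemma P2_sphDir (φ θ : ℝ) :
    P2 (sphDir φ θ) = Real.sin θ • WithLp.toLp 2 ![Real.cos φ, Real.sin φ] := by
  ext i; fin_cases i <;> simp [P2, sphDir, mul_comm]

lemma P2_cross3_e3_sphDir (φ θ : ℝ) :
    P2 (cross3 e3 (sphDir φ θ)) = Real.sin θ • WithLp.toLp 2 ![-Real.sin φ, Real.cos φ] := by
  ext i; fin_cases i <;> simp [P2, cross3, e3, sphDir, cross_apply, mul_comm]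

lemma norm_toLp_two {a b : ℝ} (h : a ^ 2 + b ^ 2 = 1) :
    ‖(WithLp.toLp 2 ![a, b] : R2)‖ = 1 := by
  simp [EuclideanSpace.norm_eq, Fin.sum_univ_two, h]

lemma norm_e3_add_sphDir (φ : ℝ) {θ : ℝ} (hcos : 0 ≤ Real.cos (θ / 2)) :
    ‖e3 + sphDir φ θ‖ = 2 * Real.cos (θ / 2) := by
  have hsq : (Real.sin θ * Real.cos φ) ^ 2 + (Real.sin θ * Real.sin φ) ^ 2 + (1 + Real.cos θ) ^ 2
      = (2 * Real.cos (θ / 2)) ^ 2 := by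
    have hcos : Real.cos (θ / 2) ^ 2 = 1 / 2 + Real.cos θ / 2 := by
      rw [Real.cos_sq, mul_div_cancel₀ θ two_ne_zero]
    nlinarith [Real.sin_sq_add_cos_sq φ, Real.sin_sq_add_cos_sq θ]
  rw [EuclideanSpace.norm_eq, ← Real.sqrt_sq (by positivity : 0 ≤ 2 * Real.cos (θ / 2)), ← hsq]
  simp [Fin.sum_univ_three, e3, sphDir, add_comm]

lemma inv_norm_smul_smul_of_pos {E : Type*} [NormedAddCommGroup E] [NormedSpace ℝ E]
    {s : ℝ} {u : E} (hs : 0 < s) (hu : ‖u‖ = 1) : ‖s • u‖⁻¹ • s • u = u := by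
  rw [norm_smul_of_nonneg hs.le, hu, mul_one, inv_smul_smul₀ hs.ne']

theorem ellipticArc_euler_general (k0 : ℝ) (Rs Rt : Mat3)
    (hRs : SO3 Rs)
    (hne : rotE3 Rs ≠ rotE3 Rt) (hne' : rotE3 Rs ≠ -rotE3 Rt)
    (φ θ ψ : ℝ) (hθ : θ ∈ Icc 0 π)
    (heuler : Rs.transpose * Rt = Q3mat φ * Q2mat θ * Q3mat ψ) :
    ∀ β ∈ Jset Rs Rt, gammaArc k0 Rs Rt β = gammaEuler k0 φ θ β := by
  intro β _
  have hrel : relAxis Rs Rt = sphDir φ θ := by rw [relAxis, heuler, act3_euler_e3]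
  have hRt : rotE3 Rt = act3 Rs (sphDir φ θ) := by
    rw [← hrel, act3_relAxis (mul_eq_one_comm.mp hRs.1)]
  have hsin : 0 < Real.sin θ := by
    refine Real.sin_pos_of_pos_of_lt_pi (hθ.1.lt_of_ne ?_) (hθ.2.lt_of_ne ?_)
    · rintro rfl
      exact hne (by rw [hRt, sphDir_zero, rotE3])
    · rintro rfl
      exact hne' (by rw [hRt, sphDir_pi, act3_neg, rotE3, neg_neg])
  have hcos : 0 ≤ Real.cos (θ / 2) :=
    Real.cos_nonneg_of_mem_Icc ⟨by linarith [hθ.1, Real.pi_pos], by linarith [hθ.2]⟩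
  have hsum : ‖rotE3 Rs + rotE3 Rt‖ = 2 * Real.cos (θ / 2) := by
    rw [hRt, rotE3, ← act3_add, norm_act3_of_transpose_mul_self hRs.1, norm_e3_add_sphDir φ hcos]
  have hu := norm_toLp_two (Real.cos_sq_add_sin_sq φ)
  have hv := norm_toLp_two (a := -Real.sin φ) (b := Real.cos φ)
    (by rw [neg_sq]; exact Real.sin_sq_add_cos_sq φ)
  rw [gammaArc, gammaEuler, w1, w2, aTilde, aRad, hsum, hrel, P2_sphDir, P2_cross3_e3_sphDir,
    inv_norm_smul_smul_of_pos hsin hu, inv_norm_smul_smul_of_pos hsin hv,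
    norm_smul_of_nonneg hsin.le, hu]
  congr 2 <;> ring

/-- Proposition: representation of `γ_{s,t}` via the Euler angles of
`Rsᵀ Rt`. If `Rs·e3 ≠ ±Rt·e3` and `(φ, θ, ψ)` are Euler angles of `Rsᵀ Rt`, then for all
`β ∈ J_{s,t}` the elliptic arc `γ_{s,t}(β)` equals
`(k0/2)·sin θ·(cos β − 1)·(cos φ, sin φ) + k0·cos(θ/2)·sin β·(−sin φ, cos φ)`. -/
theorem ellipticArc_euler (k0 : ℝ) (hk0 : 0 < k0) (Rs Rt : Mat3)
    (hRs : SO3 Rs) (hRt : SO3 Rt)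
    (hne : rotE3 Rs ≠ rotE3 Rt) (hne' : rotE3 Rs ≠ -rotE3 Rt)
    (φ θ ψ : ℝ) (hθ : θ ∈ Icc 0 π)
    (heuler : Rs.transpose * Rt = Q3mat φ * Q2mat θ * Q3mat ψ) :
    ∀ β ∈ Jset Rs Rt, gammaArc k0 Rs Rt β = gammaEuler k0 φ θ β :=
  ellipticArc_euler_general k0 Rs Rt hRs hne hne' φ θ ψ hθ heuler
end
end

section
/- Let k0 > 0, let f : ℝ³ → ℝ be integrable, and let R_s, R_t ∈ SO(3) with R_s·e3 = R_t·e3. Then there exists α ∈ ℝ such that R_sᵀR_t = Q³(α), and for any such α one has ν_{R_s}(Q(α)·k) = ν_{R_t}(k) for all k ∈ B. -/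
noncomputable section
open Real Set MeasureTheory
open scoped RealInnerProductSpace

/-- The 3D Fourier transform `𝓕f(y) = (2π)^{−3/2} ∫ f(x) e^{−i⟨x,y⟩} dx`. -/
def FT (f : R3 → ℝ) (y : R3) : ℂ :=
  ((2 * π : ℝ) ^ (-(3 : ℝ) / 2) : ℝ) *
    ∫ x : R3, (f x : ℂ) * Complex.exp (-Complex.I * (⟪x, y⟫ : ℝ))

/-- The scaled squared energy `ν_R(k) = |𝓕f(R·h(k))|²`. -/
def nu (k0 : ℝ) (f : R3 → ℝ) (R : Mat3) (k : R2) : ℝ :=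
  ‖FT f (act3 R (hmap k0 k))‖ ^ 2

def rot2 (α : ℝ) : Matrix (Fin 2) (Fin 2) ℝ :=
  !![Real.cos α, -Real.sin α; Real.sin α, Real.cos α]

def act2 (Q : Matrix (Fin 2) (Fin 2) ℝ) (k : R2) : R2 := WithLp.toLp 2 (Q.mulVec k)

/-!
`Rsᵀ Rt` lies in SO(3) and fixes `e3`, so it is a rotation `Q³(α)` about the `e3`-axis.
Since `κ(k)` depends on `k` only through `‖k‖`, the map `h` intertwines the planar rotation
with it, `h(Q(α) k) = Q³(α) h(k)`. Hence `Rs h(Q(α) k) = Rs Q³(α) h(k) = Rt h(k)`, and both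
energies are values of `|𝓕f|²` at the same point.
-/

lemma exists_cos_sin_eq {a c : ℝ} (h : a ^ 2 + c ^ 2 = 1) :
    ∃ α : ℝ, Real.cos α = a ∧ Real.sin α = c := by
  have hnorm : ‖(⟨a, c⟩ : ℂ)‖ = 1 := by
    rw [Complex.norm_def, Complex.normSq_mk, ← sq, ← sq, h, Real.sqrt_one]
  refine ⟨Complex.arg ⟨a, c⟩, ?_, ?_⟩
  · rw [Complex.cos_arg (norm_ne_zero_iff.mp (hnorm ▸ one_ne_zero)), hnorm, div_one]
  · rw [Complex.sin_arg, hnorm, div_one]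

namespace SO3

open Matrix

variable {R S : Mat3}

lemma mul_transpose (hR : SO3 R) : R * R.transpose = 1 :=
  mul_eq_one_comm.mp hR.1

lemma transpose_mul (hR : SO3 R) (hS : SO3 S) : SO3 (R.transpose * S) := by
  refine ⟨?_, by rw [Matrix.det_mul, Matrix.det_transpose, hR.2, hS.2, one_mul]⟩
  rw [Matrix.transpose_mul, Matrix.transpose_transpose, Matrix.mul_assoc,
    ← Matrix.mul_assoc R, hR.mul_transpose, Matrix.one_mul, hS.1]

lemma transpose_mulVec_e3 (hR : SO3 R) (hfix : R *ᵥ e3 = e3) : R.transpose *ᵥ e3 = e3 := by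
  conv_lhs => rw [← hfix]
  rw [Matrix.mulVec_mulVec, hR.1, Matrix.one_mulVec]

lemma eq_Q3mat_of_mulVec_e3 (hR : SO3 R) (hfix : R *ᵥ e3 = e3) : ∃ α : ℝ, R = Q3mat α := by
  have hcol : ∀ i, R i 2 = ![0, 0, 1] i := fun i => by
    simpa [Matrix.mulVec, dotProduct, e3, Fin.sum_univ_three] using congrFun hfix i
  have hrow : ∀ j, R 2 j = ![0, 0, 1] j := fun j => by
    simpa [Matrix.mulVec, dotProduct, e3, Fin.sum_univ_three] using
      congrFun (hR.transpose_mulVec_e3 hfix) j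
  have h02 := hcol 0; have h12 := hcol 1; have h22 := hcol 2
  have h20 := hrow 0; have h21 := hrow 1
  simp only [Matrix.cons_val_zero, Matrix.cons_val_one, Matrix.cons_val_two, Matrix.head_cons,
    Matrix.tail_cons] at h02 h12 h22 h20 h21
  have hcol0 : R 0 0 ^ 2 + R 1 0 ^ 2 = 1 := by
    simpa [Matrix.mul_apply, Fin.sum_univ_three, h20, sq] using congrFun (congrFun hR.1 0) 0
  have hcol01 : R 0 0 * R 0 1 + R 1 0 * R 1 1 = 0 := by
    simpa [Matrix.mul_apply, Fin.sum_univ_three, h20] using congrFun (congrFun hR.1 0) 1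
  have hdet : R 0 0 * R 1 1 - R 0 1 * R 1 0 = 1 := by
    simpa [Matrix.det_fin_three, h02, h12, h20, h21, h22] using hR.2
  have h01 : R 0 1 = -R 1 0 := by
    linear_combination -(R 0 1 * hcol0) - R 1 0 * hdet + R 0 0 * hcol01
  have h11 : R 1 1 = R 0 0 := by
    linear_combination -(R 1 1 * hcol0) + R 0 0 * hdet + R 1 0 * hcol01
  obtain ⟨α, hcos, hsin⟩ := exists_cos_sin_eq hcol0
  refine ⟨α, ?_⟩
  ext i j
  fin_cases i <;> fin_cases j <;> simp [Q3mat, hcos, hsin, h02, h12, h20, h21, h22, h01, h11]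

end SO3

lemma act3_mul (A B : Mat3) (x : R3) : act3 (A * B) x = act3 A (act3 B x) := by
  simp [act3, Matrix.mulVec_mulVec]

lemma norm_act2_rot2 (α : ℝ) (k : R2) : ‖act2 (rot2 α) k‖ = ‖k‖ := by
  simp only [EuclideanSpace.norm_eq, Fin.sum_univ_two, Real.norm_eq_abs, sq_abs]
  congr 1
  simp only [act2, rot2, Matrix.cons_mulVec, dotProduct, Fin.sum_univ_two, Fin.isValue,
    Matrix.cons_val_zero, Matrix.cons_val_one, Matrix.cons_val_fin_one, neg_mul,
    Matrix.empty_mulVec]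
  linear_combination (k 0 ^ 2 + k 1 ^ 2) * Real.sin_sq_add_cos_sq α

lemma hmap_act2_rot2 (k0 α : ℝ) (k : R2) :
    hmap k0 (act2 (rot2 α) k) = act3 (Q3mat α) (hmap k0 k) := by
  have hkappa : kappa k0 (act2 (rot2 α) k) = kappa k0 k := by
    rw [kappa, kappa, norm_act2_rot2]
  rw [hmap, hmap, hkappa]
  ext j
  fin_cases j <;>
    simp [act2, act3, rot2, Q3mat, dotProduct, Fin.sum_univ_two] <;> ring

theorem special_case_plus_general (k0 : ℝ) (f : R3 → ℝ)
    (Rs Rt : Mat3) (hRs : SO3 Rs) (hRt : SO3 Rt)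
    (heq : rotE3 Rs = rotE3 Rt) :
    (∃ α : ℝ, Rs.transpose * Rt = Q3mat α) ∧
    (∀ α : ℝ, Rs.transpose * Rt = Q3mat α →
      ∀ k ∈ ball2 k0, nu k0 f Rs (act2 (rot2 α) k) = nu k0 f Rt k) := by
  refine ⟨(hRs.transpose_mul hRt).eq_Q3mat_of_mulVec_e3 ?_, fun α hα k _ => ?_⟩
  · have hRe3 : Rt.mulVec e3 = Rs.mulVec e3 := congrArg WithLp.ofLp heq.symm
    rw [← Matrix.mulVec_mulVec, hRe3, Matrix.mulVec_mulVec, hRs.1, Matrix.one_mulVec]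
  · have hRt_eq : Rt = Rs * Q3mat α := by
      rw [← hα, ← Matrix.mul_assoc, hRs.mul_transpose, Matrix.one_mul]
    rw [nu, nu, hmap_act2_rot2, hRt_eq, act3_mul]

/-- Proposition: special case `Rs·e3 = Rt·e3`.
There exists `α` with `Rsᵀ Rt = Q³(α)`, and for any such `α`,
`ν_{Rs}(Q(α)·k) = ν_{Rt}(k)` for all `k ∈ B`. -/
theorem special_case_plus (k0 : ℝ) (hk0 : 0 < k0) (f : R3 → ℝ)
    (hf : MeasureTheory.Integrable f) (Rs Rt : Mat3) (hRs : SO3 Rs) (hRt : SO3 Rt)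
    (heq : rotE3 Rs = rotE3 Rt) :
    (∃ α : ℝ, Rs.transpose * Rt = Q3mat α) ∧
    (∀ α : ℝ, Rs.transpose * Rt = Q3mat α →
      ∀ k ∈ ball2 k0, nu k0 f Rs (act2 (rot2 α) k) = nu k0 f Rt k) :=
  special_case_plus_general k0 f Rs Rt hRs hRt heq
end
end

section
/- Let k0 > 0, let f : ℝ³ → ℝ be integrable with compact support, and let R : ℝ → SO(3) be continuously differentiable with angular velocity ω_t = (ρ_t·φ_{t,1}, ρ_t·φ_{t,2}, ζ_t) in cylindrical coordinates. Then for every t ∈ ℝ and every r ∈ (−k0, k0): ∂_t ν_t(r·φ_t) = (ρ_t·(k0 − √(k0² − r²)) + r·ζ_t) · ⟨∇ν_t(r·φ_t), (−φ_{t,2}, φ_{t,1})⟩, where ∂_t ν_t(k) denotes the derivative of s ↦ ν_s(k) at s = t (with k fixed) and ∇ν_t(k) the gradient of ν_t with respect to k ∈ B. -/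
noncomputable section
open Real Set MeasureTheory
open scoped RealInnerProductSpace

/-- The half unit circle `S¹₊ = {(cos α, sin α) : α ∈ [0, π)}`. -/
def S1plus : Set R2 :=
  {v | ∃ α : ℝ, 0 ≤ α ∧ α < π ∧ v = (![Real.cos α, Real.sin α] : Fin 2 → ℝ)}

/-- Rotation of a planar vector by 90 degrees: `(φ₁, φ₂) ↦ (−φ₂, φ₁)`. -/
def rot90 (v : R2) : R2 := WithLp.toLp 2 (![-(v 1), v 0] : Fin 2 → ℝ)

/-! Write `ν_s(k) = F (R_s h(k))` with `F = ‖𝓕f‖²`, which is differentiable because `f` has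
compact support. The time derivative is `dF (R_t h) (R_t' h) = dF (R_t h) (R_t (ω_t × h))`, while
the gradient paired with `φ^⊥` is `dF (R_t h) (R_t (Dh φ^⊥))`. At `k = r φ` the vertical
component of `Dh φ^⊥` is `-⟨k, φ^⊥⟩ / κ = 0`, so `Dh φ^⊥ = (φ^⊥, 0)`, and a direct computation
gives `ω_t × h(r φ) = (ρ_t (k0 - κ) + r ζ_t) (φ^⊥, 0)`. -/

open FourierTransform in
lemma FT_eq_fourier (f : R3 → ℝ) (y : R3) :
    FT f y = (((2 * π : ℝ) ^ (-(3 : ℝ) / 2) : ℝ) : ℂ) *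
      𝓕 (fun x => (f x : ℂ)) ((2 * π)⁻¹ • y) := by
  rw [FT, Real.fourier_eq']
  congr 1
  refine integral_congr_ae (Filter.Eventually.of_forall fun x => ?_)
  have hphase : -2 * π * ⟪x, (2 * π)⁻¹ • y⟫ = -⟪x, y⟫ := by
    rw [real_inner_smul_right]
    field_simp
  simp only [hphase, smul_eq_mul]
  push_cast
  ring_nf

lemma integrable_norm_mul_norm_of_hasCompactSupport {E F : Type*} [NormedAddCommGroup E]
    [MeasurableSpace E] [OpensMeasurableSpace E] [SecondCountableTopology E]
    [NormedAddCommGroup F] {μ : Measure E} {g : E → F}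
    (hg : Integrable g μ) (hsupp : HasCompactSupport g) :
    Integrable (fun v => ‖v‖ * ‖g v‖) μ := by
  obtain ⟨C, hC⟩ := hsupp.isCompact.isBounded.subset_closedBall 0
  refine (hg.norm.const_mul C).mono'
    (continuous_norm.aestronglyMeasurable.mul hg.aestronglyMeasurable.norm)
    (Filter.Eventually.of_forall fun v => ?_)
  rw [norm_mul, norm_norm, norm_norm]
  by_cases hv : g v = 0
  · simp [hv]
  · gcongr
    simpa using hC (subset_tsupport g hv)

open FourierTransform in
lemma differentiable_FT {f : R3 → ℝ} (hf : Integrable f) (hsupp : HasCompactSupport f) :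
    Differentiable ℝ (FT f) := by
  have hf' : Integrable fun x => (f x : ℂ) := hf.ofReal
  have hd : Differentiable ℝ (𝓕 fun x => (f x : ℂ)) :=
    Real.differentiable_fourier hf'
      (integrable_norm_mul_norm_of_hasCompactSupport hf' (hsupp.comp_left Complex.ofReal_zero))
  have hs : Differentiable ℝ (fun y : R3 => (2 * π)⁻¹ • y) := by fun_prop
  rw [funext (FT_eq_fourier f)]
  exact (hd.comp hs).const_mul _

def planeEmbedding : R2 →L[ℝ] R3 :=
  LinearMap.toContinuousLinearMap
    { toFun := fun k => WithLp.toLp 2 ![k 0, k 1, 0]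
      map_add' := fun k l => by ext i; fin_cases i <;> simp
      map_smul' := fun c k => by ext i; fin_cases i <;> simp }

lemma hmap_eq_planeEmbedding_add (k0 : ℝ) (k : R2) :
    hmap k0 k = planeEmbedding k + (kappa k0 k - k0) • e3 := by
  ext i; fin_cases i <;> simp [hmap, planeEmbedding, e3]

lemma kappa_smul_of_norm_eq_one {φ : R2} (hφ : ‖φ‖ = 1) (k0 r : ℝ) :
    kappa k0 (r • φ) = √(k0 ^ 2 - r ^ 2) := by
  rw [kappa, norm_smul, hφ, mul_one, Real.norm_eq_abs, sq_abs]

lemma hasFDerivAt_kappa {k0 : ℝ} {k : R2} (hk : ‖k‖ < k0) :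
    HasFDerivAt (kappa k0) (-(kappa k0 k)⁻¹ • innerSL ℝ k) k := by
  have hpos : 0 < k0 ^ 2 - ‖k‖ ^ 2 := by nlinarith [norm_nonneg k]
  refine (((hasFDerivAt_const (k0 ^ 2) k).sub
    (hasStrictFDerivAt_norm_sq k).hasFDerivAt).sqrt hpos.ne').congr_fderiv ?_
  ext v
  simp only [Pi.sub_apply, one_div, mul_inv_rev, zero_sub, smul_neg, neg_apply, smul_apply,
    coe_innerSL_apply, nsmul_eq_mul, Nat.cast_ofNat, smul_eq_mul, kappa, neg_smul, neg_inj]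
  field_simp

lemma hasFDerivAt_hmap {k0 : ℝ} {k : R2} (hk : ‖k‖ < k0) :
    HasFDerivAt (hmap k0)
      (planeEmbedding + (-(kappa k0 k)⁻¹ • innerSL ℝ k).smulRight e3) k := by
  rw [funext (hmap_eq_planeEmbedding_add k0)]
  exact planeEmbedding.hasFDerivAt.add (((hasFDerivAt_kappa hk).sub_const k0).smul_const e3)

lemma inner_rot90_self (v : R2) : ⟪v, rot90 v⟫ = 0 := by
  simp only [rot90, Fin.isValue, PiLp.inner_apply, RCLike.inner_apply, ringHom_apply,
    Fin.sum_univ_two, Matrix.cons_val_zero, neg_mul, Matrix.cons_val_one, Matrix.cons_val_fin_one]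
  ring

lemma norm_eq_one_of_mem_S1plus {v : R2} (hv : v ∈ S1plus) : ‖v‖ = 1 := by
  obtain ⟨α, -, -, hv⟩ := hv
  simp [EuclideanSpace.norm_eq, Fin.sum_univ_two, hv]

lemma cross3_hmap_of_cylindrical {φ : R2} (hφ : ‖φ‖ = 1) {ω : R3} {ρ ζ : ℝ}
    (hω : ω = (![ρ * φ 0, ρ * φ 1, ζ] : Fin 3 → ℝ)) (k0 r : ℝ) :
    cross3 ω (hmap k0 (r • φ)) =
      (ρ * (k0 - √(k0 ^ 2 - r ^ 2)) + r * ζ) • planeEmbedding (rot90 φ) := by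
  have hκ := kappa_smul_of_norm_eq_one hφ k0 r
  ext i; fin_cases i <;>
    simp only [cross3, hω, hmap, hκ, planeEmbedding, rot90, cross_apply, PiLp.smul_apply,
      LinearMap.coe_toContinuousLinearMap', LinearMap.coe_mk, AddHom.coe_mk, Fin.isValue,
      Matrix.cons_val_zero, Matrix.cons_val_one, Matrix.cons_val, Matrix.cons_val_fin_one,
      Fin.zero_eta, Fin.mk_one, Fin.reduceFinMk, smul_eq_mul] <;> ring

lemma hasDerivAt_act3 {R : ℝ → Mat3} {R' : Mat3} {t : ℝ}
    (h : ∀ i j, HasDerivAt (fun s => R s i j) (R' i j) t) (x : R3) :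
    HasDerivAt (fun s => act3 (R s) x) (act3 R' x) t := by
  have hv : HasDerivAt (fun s => (R s).mulVec x) (R'.mulVec x) t := by
    refine hasDerivAt_pi.2 fun i => ?_
    simp only [Matrix.mulVec, dotProduct]
    exact HasDerivAt.fun_sum fun j _ => (h i j).mul_const _
  exact (PiLp.continuousLinearEquiv 2 ℝ (fun _ : Fin 3 => ℝ)).symm.hasFDerivAt.comp_hasDerivAt t hv

lemma act3_eq_act3_cross3 {R R' : Mat3} (hR : R.transpose * R = 1) {ω : R3}
    (hω : ∀ y, act3 (R.transpose * R') y = cross3 ω y) (y : R3) :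
    act3 R' y = act3 R (cross3 ω y) := by
  rw [← hω, act3, act3, act3, Matrix.mulVec_mulVec, ← mul_assoc, mul_eq_one_comm.mp hR, one_mul]

lemma act3_smul (R : Mat3) (c : ℝ) (x : R3) : act3 R (c • x) = c • act3 R x :=
  map_smul (Matrix.toEuclideanCLM (𝕜 := ℝ) R) c x

section

variable {F : R3 → ℝ} {k0 : ℝ}

lemma deriv_comp_act3 {R : ℝ → Mat3} {R' : Mat3} {t : ℝ} {x : R3}
    (hF : DifferentiableAt ℝ F (act3 (R t) x))
    (hR : ∀ i j, HasDerivAt (fun s => R s i j) (R' i j) t) :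
    deriv (fun s => F (act3 (R s) x)) t = fderiv ℝ F (act3 (R t) x) (act3 R' x) :=
  (hF.hasFDerivAt.comp_hasDerivAt t (hasDerivAt_act3 hR x)).deriv

lemma inner_gradient_comp_act3_hmap {R : Mat3} {k v : R2}
    (hF : DifferentiableAt ℝ F (act3 R (hmap k0 k))) (hk : ‖k‖ < k0) (hv : ⟪k, v⟫ = 0) :
    ⟪gradient (fun k => F (act3 R (hmap k0 k))) k, v⟫ =
      fderiv ℝ F (act3 R (hmap k0 k)) (act3 R (planeEmbedding v)) := by
  have hG : HasFDerivAt (fun k => F (act3 R (hmap k0 k))) _ k := hF.hasFDerivAt.comp k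
    ((Matrix.toEuclideanCLM (𝕜 := ℝ) R).hasFDerivAt.comp k (hasFDerivAt_hmap hk))
  rw [inner_gradient_left, hG.fderiv]
  simp only [neg_smul, ContinuousLinearMap.comp_add, add_apply, ContinuousLinearMap.comp_apply,
    ContinuousLinearMap.smulRight_apply, neg_apply, smul_apply, coe_innerSL_apply, hv, smul_eq_mul,
    mul_zero, neg_zero, zero_smul, map_zero, add_zero]
  rfl

theorem deriv_comp_act3_hmap_eq_inner_gradient {R : ℝ → Mat3} {R' : Mat3} {t : ℝ}
    (hR : ∀ i j, HasDerivAt (fun s => R s i j) (R' i j) t) (hSO : (R t).transpose * R t = 1)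
    {ω : R3} (hω : ∀ y, act3 ((R t).transpose * R') y = cross3 ω y)
    {φ : R2} (hφ : ‖φ‖ = 1) {ρ ζ : ℝ} (hcyl : ω = (![ρ * φ 0, ρ * φ 1, ζ] : Fin 3 → ℝ))
    {r : ℝ} (hr : |r| < k0) (hF : DifferentiableAt ℝ F (act3 (R t) (hmap k0 (r • φ)))) :
    deriv (fun s => F (act3 (R s) (hmap k0 (r • φ)))) t =
      (ρ * (k0 - √(k0 ^ 2 - r ^ 2)) + r * ζ) *
        ⟪gradient (fun k => F (act3 (R t) (hmap k0 k))) (r • φ), rot90 φ⟫ := by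
  have hk : ‖r • φ‖ < k0 := by rwa [norm_smul, hφ, mul_one, Real.norm_eq_abs]
  have hperp : ⟪r • φ, rot90 φ⟫ = 0 := by rw [real_inner_smul_left, inner_rot90_self, mul_zero]
  rw [deriv_comp_act3 hF hR, inner_gradient_comp_act3_hmap hF hk hperp,
    act3_eq_act3_cross3 hSO hω, cross3_hmap_of_cylindrical hφ hcyl, act3_smul, map_smul,
    smul_eq_mul]

end

theorem infinitesimal_common_circle_general (k0 : ℝ) (f : R3 → ℝ)
    (hf : MeasureTheory.Integrable f) (hsupp : HasCompactSupport f)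
    (R R' : ℝ → Mat3) (hSO : ∀ t, SO3 (R t))
    (hderiv : ∀ t i j, HasDerivAt (fun s => R s i j) (R' t i j) t)
    (ω : ℝ → R3)
    (hω : ∀ t (y : R3), act3 ((R t).transpose * R' t) y = cross3 (ω t) y)
    (ρ ζ : ℝ → ℝ) (φ : ℝ → R2) (hφ : ∀ t, φ t ∈ S1plus)
    (hcyl : ∀ t, ω t = (![ρ t * φ t 0, ρ t * φ t 1, ζ t] : Fin 3 → ℝ)) :
    ∀ (t : ℝ), ∀ r ∈ Ioo (-k0) k0,
      deriv (fun s => nu k0 f (R s) (r • φ t)) t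
        = (ρ t * (k0 - Real.sqrt (k0 ^ 2 - r ^ 2)) + r * ζ t)
            * ⟪gradient (nu k0 f (R t)) (r • φ t), rot90 (φ t)⟫ := by
  intro t r hr
  exact deriv_comp_act3_hmap_eq_inner_gradient (hderiv t) (hSO t).1 (hω t)
    (norm_eq_one_of_mem_S1plus (hφ t)) (hcyl t) (abs_lt.2 hr)
    ((differentiable_FT hf hsupp).norm_sq ℝ _)

/-- Lemma: infinitesimal common circle relation.
Let `R : ℝ → SO(3)` be continuously differentiable (with derivative `R'`), with angular
velocity `ω_t` (defined by `R_tᵀ R_t′ y = ω_t × y`) written in cylindrical coordinates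
`ω_t = (ρ_t φ_{t,1}, ρ_t φ_{t,2}, ζ_t)`, `φ_t ∈ S¹₊`.  Then for every `t` and every
`r ∈ (−k0, k0)`,
`∂_t ν_t(r φ_t) = (ρ_t (k0 − √(k0² − r²)) + r ζ_t) ⟨∇ν_t(r φ_t), (−φ_{t,2}, φ_{t,1})⟩`. -/
theorem infinitesimal_common_circle (k0 : ℝ) (hk0 : 0 < k0) (f : R3 → ℝ)
    (hf : MeasureTheory.Integrable f) (hsupp : HasCompactSupport f)
    (R R' : ℝ → Mat3) (hSO : ∀ t, SO3 (R t))
    (hderiv : ∀ t i j, HasDerivAt (fun s => R s i j) (R' t i j) t)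
    (hcont : ∀ i j, Continuous fun t => R' t i j)
    (ω : ℝ → R3)
    (hω : ∀ t (y : R3), act3 ((R t).transpose * R' t) y = cross3 (ω t) y)
    (ρ ζ : ℝ → ℝ) (φ : ℝ → R2) (hφ : ∀ t, φ t ∈ S1plus)
    (hcyl : ∀ t, ω t = (![ρ t * φ t 0, ρ t * φ t 1, ζ t] : Fin 3 → ℝ)) :
    ∀ (t : ℝ), ∀ r ∈ Ioo (-k0) k0,
      deriv (fun s => nu k0 f (R s) (r • φ t)) t
        = (ρ t * (k0 - Real.sqrt (k0 ^ 2 - r ^ 2)) + r * ζ t)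
            * ⟪gradient (nu k0 f (R t)) (r • φ t), rot90 (φ t)⟫ :=
  infinitesimal_common_circle_general k0 f hf hsupp R R' hSO hderiv ω hω ρ ζ φ hφ hcyl
end
end

section
/- Let k0 > 0 and R_s, R_t ∈ SO(3) with R_s·e3 ≠ R_t·e3 and R_s·e3 ≠ −R_t·e3, and let v ∈ ℝ³. Suppose there is ε > 0 such that (−ε, ε) ⊆ J_{s,t} ∩ J*_{s,t} and e^{i⟨v, σ_{s,t}(β)⟩} = 1 and e^{i⟨v, σ*_{s,t}(β)⟩} = 1 for all β ∈ (−ε, ε). Then v = 0. (This expresses the uniqueness in Theorem 5.3(i): the relative translation R_sᵀR_t·d_t − d_s is uniquely determined by the phase relations along the common circular arc and its dual.) -/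
noncomputable section
open Real Set MeasureTheory
open scoped RealInnerProductSpace

def aStar (k0 : ℝ) (Rs Rt : Mat3) : ℝ := k0 / 2 * ‖rotE3 Rs - rotE3 Rt‖

def sigmaStar (k0 : ℝ) (Rs Rt : Mat3) (β : ℝ) : R3 :=
  (aStar k0 Rs Rt * (Real.cos β - 1)) • v3 Rs Rt - (aStar k0 Rs Rt * Real.sin β) • v2 Rs Rt

def JstarSet (Rs Rt : Mat3) : Set ℝ :=
  if 0 ≤ cST Rs Rt then Ioc (-π) π
  else Ioo (-(Real.arccos ((cST Rs Rt + 1) / (cST Rs Rt - 1))))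
    (Real.arccos ((cST Rs Rt + 1) / (cST Rs Rt - 1)))

/- ### Auxiliary lemmas -/

open Matrix in
lemma inner_eq_dot (x y : R3) : ⟪x, y⟫ = x ⬝ᵥ y := by
  simp [PiLp.inner_apply, RCLike.inner_apply, conj_trivial, dotProduct, mul_comm]

open Matrix in
lemma triple_cross (u v w : Fin 3 → ℝ) :
    crossProduct u (crossProduct v w) = (u ⬝ᵥ w) • v - (u ⬝ᵥ v) • w := by
  funext i; fin_cases i <;>
    simp [crossProduct, dotProduct, Fin.sum_univ_three] <;> ring

open Matrix in
lemma lagrange (v w : Fin 3 → ℝ) :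
    (crossProduct v w) ⬝ᵥ (crossProduct v w) = (v ⬝ᵥ v) * (w ⬝ᵥ w) - (v ⬝ᵥ w) ^ 2 := by
  simp [crossProduct, dotProduct, Fin.sum_univ_three]; ring

open Matrix in
lemma mulVec_dot (R : Mat3) (h : R.transpose * R = 1) (x y : Fin 3 → ℝ) :
    R.mulVec x ⬝ᵥ R.mulVec y = x ⬝ᵥ y := by
  rw [Matrix.dotProduct_mulVec, ← Matrix.mulVec_transpose, Matrix.mulVec_mulVec, h,
    Matrix.one_mulVec]

open Matrix in
lemma vanish_of_perp (v p q : Fin 3 → ℝ) (hp : v ⬝ᵥ p = 0) (hq : v ⬝ᵥ q = 0)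
    (hw : v ⬝ᵥ (crossProduct p q) = 0) (hne : crossProduct p q ≠ 0) : v = 0 := by
  set w := crossProduct p q with hwdef
  have hvw : crossProduct v w = 0 := by
    rw [hwdef, triple_cross, hp, hq]; simp
  have hL := lagrange v w
  rw [hvw, hw] at hL
  simp only [zero_dotProduct] at hL
  have hww : w ⬝ᵥ w ≠ 0 := fun h => hne (dotProduct_self_eq_zero.mp h)
  have hvv : v ⬝ᵥ v = 0 := by
    rcases mul_eq_zero.mp (by linarith : (v ⬝ᵥ v) * (w ⬝ᵥ w) = 0) with h | h
    · exact h
    · exact absurd h hww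
  exact dotProduct_self_eq_zero.mp hvv

lemma exp_one_arg (x : ℝ) (h : Complex.exp (Complex.I * x) = 1) :
    ∃ n : ℤ, x = n * (2 * Real.pi) := by
  rw [Complex.exp_eq_one_iff] at h
  obtain ⟨n, hn⟩ := h
  refine ⟨n, ?_⟩
  have h2 : (Complex.I * x) = Complex.I * ((n : ℂ) * (2 * Real.pi)) := by rw [hn]; ring
  have h3 := mul_left_cancel₀ Complex.I_ne_zero h2
  exact_mod_cast h3

open Matrix

set_option maxHeartbeats 1600000 in
/-- uniqueness of the relative translation, non-degenerate case.
If the phase factors `e^{i⟨v, σ_{s,t}(β)⟩}` and `e^{i⟨v, σ*_{s,t}(β)⟩}` equal `1` for all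
`β` in an interval `(−ε, ε) ⊆ J_{s,t} ∩ J*_{s,t}`, then `v = 0`. -/
theorem translation_uniqueness_generic (k0 : ℝ) (hk0 : 0 < k0) (Rs Rt : Mat3)
    (hRs : SO3 Rs) (hRt : SO3 Rt)
    (hne : rotE3 Rs ≠ rotE3 Rt) (hne' : rotE3 Rs ≠ -rotE3 Rt)
    (v : R3) (ε : ℝ) (hε : 0 < ε)
    (hsub : Ioo (-ε) ε ⊆ Jset Rs Rt ∩ JstarSet Rs Rt)
    (hphase : ∀ β ∈ Ioo (-ε) ε,
      Complex.exp (Complex.I * (⟪v, sigmaArc k0 Rs Rt β⟫ : ℝ)) = 1 ∧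
      Complex.exp (Complex.I * (⟪v, sigmaStar k0 Rs Rt β⟫ : ℝ)) = 1) :
    v = 0 := by
  classical
  set p : R3 := rotE3 Rs with hpdef
  set q : R3 := rotE3 Rt with hqdef
  -- basic nonvanishing facts
  have hpq_add : p + q ≠ 0 := by
    intro h
    exact hne' (by rw [eq_neg_iff_add_eq_zero]; exact h)
  have hpq_sub : p - q ≠ 0 := sub_ne_zero.mpr hne
  -- unit norms
  have he3 : (e3 : Fin 3 → ℝ) ⬝ᵥ (e3 : Fin 3 → ℝ) = 1 := by
    simp [e3, dotProduct, Fin.sum_univ_three]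
  have hpp : ⟪p, p⟫ = 1 := by
    rw [inner_eq_dot]
    exact (mulVec_dot Rs hRs.1 e3 e3).trans he3
  have hqq : ⟪q, q⟫ = 1 := by
    rw [inner_eq_dot]
    exact (mulVec_dot Rt hRt.1 e3 e3).trans he3
  have hnp : ‖p‖ = 1 := by
    have := real_inner_self_eq_norm_sq p
    rw [hpp] at this
    rw [← Real.sqrt_sq (norm_nonneg p), ← this, Real.sqrt_one]
  have hnq : ‖q‖ = 1 := by
    have := real_inner_self_eq_norm_sq q
    rw [hqq] at this
    rw [← Real.sqrt_sq (norm_nonneg q), ← this, Real.sqrt_one]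
  -- cross product nonzero
  have hcross : cross3 p q ≠ 0 := by
    intro h
    have hL := lagrange (p : Fin 3 → ℝ) (q : Fin 3 → ℝ)
    have h0 : (crossProduct (p : Fin 3 → ℝ) q) ⬝ᵥ (crossProduct (p : Fin 3 → ℝ) q) = 0 := by
      have : crossProduct (p : Fin 3 → ℝ) q = 0 := by
        have h' := congrArg (WithLp.ofLp (p := 2)) h; simpa [cross3] using h'
      rw [this]; simp
    rw [h0] at hL
    have hdp : (p : Fin 3 → ℝ) ⬝ᵥ p = 1 := by rw [← inner_eq_dot]; exact hpp
    have hdq : (q : Fin 3 → ℝ) ⬝ᵥ q = 1 := by rw [← inner_eq_dot]; exact hqq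
    rw [hdp, hdq] at hL
    have hiq : ⟪p, q⟫ = (p : Fin 3 → ℝ) ⬝ᵥ q := inner_eq_dot p q
    rcases mul_self_eq_one_iff.mp
        (by nlinarith : ((p : Fin 3 → ℝ) ⬝ᵥ q) * ((p : Fin 3 → ℝ) ⬝ᵥ q) = 1) with h1 | h1
    · have h2 : ⟪p, q⟫ = 1 := by rw [hiq]; exact h1
      exact hne ((inner_eq_one_iff_of_norm_eq_one hnp hnq).mp h2)
    · have hneg : ⟪p, -q⟫ = 1 := by
        rw [inner_neg_right, hiq, h1]; ring
      have hnnq : ‖-q‖ = 1 := by rw [norm_neg]; exact hnq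
      exact hne' ((inner_eq_one_iff_of_norm_eq_one hnp hnnq).mp hneg)
  -- positive radii
  have ha : 0 < aRad k0 Rs Rt := by
    have : 0 < ‖p + q‖ := norm_pos_iff.mpr hpq_add
    unfold aRad
    rw [← hpdef, ← hqdef]
    positivity
  have ha' : 0 < aStar k0 Rs Rt := by
    have : 0 < ‖p - q‖ := norm_pos_iff.mpr hpq_sub
    unfold aStar
    rw [← hpdef, ← hqdef]
    positivity
  -- inner products with the frame
  set A : ℝ := ⟪v, v1 Rs Rt⟫ with hA
  set B : ℝ := ⟪v, v2 Rs Rt⟫ with hB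
  set C : ℝ := ⟪v, v3 Rs Rt⟫ with hC
  set a : ℝ := aRad k0 Rs Rt with haa
  set a' : ℝ := aStar k0 Rs Rt with haa'
  have hσ : ∀ β : ℝ, ⟪v, sigmaArc k0 Rs Rt β⟫
      = a * (Real.cos β - 1) * A + a * Real.sin β * B := by
    intro β
    rw [sigmaArc, inner_add_right, real_inner_smul_right, real_inner_smul_right]
  have hσ' : ∀ β : ℝ, ⟪v, sigmaStar k0 Rs Rt β⟫
      = a' * (Real.cos β - 1) * C - a' * Real.sin β * B := by
    intro β
    rw [sigmaStar, inner_sub_right, real_inner_smul_right, real_inner_smul_right]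
  set g : ℝ → ℝ := fun β => a * (Real.cos β - 1) * A + a * Real.sin β * B with hg
  set g' : ℝ → ℝ := fun β => a' * (Real.cos β - 1) * C - a' * Real.sin β * B with hg'
  have hgc : Continuous g := by fun_prop
  have hgc' : Continuous g' := by fun_prop
  have hπ : (0 : ℝ) < 2 * π := by positivity
  have hg0 : g 0 = 0 := by simp [hg]
  have hg0' : g' 0 = 0 := by simp [hg']
  -- find a small δ on which both phases stay below 2π
  have hopen : IsOpen {β : ℝ | |g β| < 2 * π ∧ |g' β| < 2 * π} := by
    apply IsOpen.inter
    · exact isOpen_lt hgc.abs continuous_const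
    · exact isOpen_lt hgc'.abs continuous_const
  have hmem : (0 : ℝ) ∈ {β : ℝ | |g β| < 2 * π ∧ |g' β| < 2 * π} := by
    constructor <;> simp [hg0, hg0', hπ]
  obtain ⟨δ, hδpos, hδ⟩ := Metric.isOpen_iff.mp hopen 0 hmem
  -- on the small interval, both phases are zero
  have hzero : ∀ β : ℝ, |β| < δ → |β| < ε → g β = 0 ∧ g' β = 0 := by
    intro β h1 h2
    have hβmem : β ∈ Ioo (-ε) ε := by
      rw [mem_Ioo]; constructor <;> [linarith [neg_abs_le β]; linarith [le_abs_self β]]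
    obtain ⟨hp1, hp2⟩ := hphase β hβmem
    have hball : β ∈ Metric.ball (0 : ℝ) δ := by
      rw [Metric.mem_ball, Real.dist_eq, sub_zero]; exact h1
    obtain ⟨hb1, hb2⟩ := hδ hball
    constructor
    · obtain ⟨n, hn⟩ := exp_one_arg _ hp1
      have hgn : g β = n * (2 * π) := by rw [hg]; rw [hσ β] at hn; exact hn
      have habsn : |(n : ℝ)| * (2 * π) < 2 * π := by
        calc |(n : ℝ)| * (2 * π) = |(n : ℝ) * (2 * π)| := by
              rw [abs_mul, abs_of_pos hπ]
          _ = |g β| := by rw [hgn]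
          _ < 2 * π := hb1
      have hn1 : |(n : ℝ)| < 1 := by
        by_contra hcon
        push_neg at hcon
        nlinarith
      have hn0 : n = 0 := by
        obtain ⟨hl, hr⟩ := abs_lt.mp hn1
        have hl' : (-1 : ℤ) < n := by exact_mod_cast hl
        have hr' : n < (1 : ℤ) := by exact_mod_cast hr
        omega
      rw [hgn, hn0]; simp
    · obtain ⟨n, hn⟩ := exp_one_arg _ hp2
      have hgn : g' β = n * (2 * π) := by rw [hg']; rw [hσ' β] at hn; exact hn
      have habsn : |(n : ℝ)| * (2 * π) < 2 * π := by
        calc |(n : ℝ)| * (2 * π) = |(n : ℝ) * (2 * π)| := by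
              rw [abs_mul, abs_of_pos hπ]
          _ = |g' β| := by rw [hgn]
          _ < 2 * π := hb2
      have hn1 : |(n : ℝ)| < 1 := by
        by_contra hcon
        push_neg at hcon
        nlinarith
      have hn0 : n = 0 := by
        obtain ⟨hl, hr⟩ := abs_lt.mp hn1
        have hl' : (-1 : ℤ) < n := by exact_mod_cast hl
        have hr' : n < (1 : ℤ) := by exact_mod_cast hr
        omega
      rw [hgn, hn0]; simp
  -- choose β₀
  set β₀ : ℝ := min (min δ ε) 1 / 2 with hβ₀
  have hβ₀pos : 0 < β₀ := by
    have : 0 < min (min δ ε) 1 := lt_min (lt_min hδpos hε) one_pos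
    positivity
  have hβ₀δ : β₀ < δ := by
    have h1 : min (min δ ε) 1 ≤ δ := le_trans (min_le_left _ _) (min_le_left _ _)
    linarith
  have hβ₀ε : β₀ < ε := by
    have h1 : min (min δ ε) 1 ≤ ε := le_trans (min_le_left _ _) (min_le_right _ _)
    linarith
  have hβ₀1 : β₀ ≤ 1 / 2 := by
    have h1 : min (min δ ε) 1 ≤ 1 := min_le_right _ _
    linarith
  have habs : |β₀| < δ ∧ |β₀| < ε := by
    rw [abs_of_pos hβ₀pos]; exact ⟨hβ₀δ, hβ₀ε⟩
  have habs' : |(-β₀)| < δ ∧ |(-β₀)| < ε := by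
    rw [abs_neg, abs_of_pos hβ₀pos]; exact ⟨hβ₀δ, hβ₀ε⟩
  obtain ⟨hz1, hz1'⟩ := hzero β₀ habs.1 habs.2
  obtain ⟨hz2, hz2'⟩ := hzero (-β₀) habs'.1 habs'.2
  -- trigonometric nonvanishing at β₀
  have hsin : 0 < Real.sin β₀ := by
    apply Real.sin_pos_of_pos_of_lt_pi hβ₀pos
    linarith [Real.pi_gt_three]
  have hcos : Real.cos β₀ < 1 := by
    rcases lt_or_eq_of_le (Real.cos_le_one β₀) with h | h
    · exact h
    · exfalso
      have := (Real.cos_eq_one_iff_of_lt_of_lt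
        (by linarith [Real.pi_gt_three] : -(2 * π) < β₀)
        (by linarith [Real.pi_gt_three] : β₀ < 2 * π)).mp h
      linarith
  -- extract A = B = C = 0
  have hgβ : a * (Real.cos β₀ - 1) * A + a * Real.sin β₀ * B = 0 := hz1
  have hgβ2 : a * (Real.cos β₀ - 1) * A - a * Real.sin β₀ * B = 0 := by
    have := hz2
    simp only [hg, Real.cos_neg, Real.sin_neg] at this
    linarith
  have hA0 : A = 0 := by
    have h1 : a * (Real.cos β₀ - 1) * A = 0 := by linarith
    have h2 : a * (Real.cos β₀ - 1) ≠ 0 :=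
      mul_ne_zero (ne_of_gt ha) (sub_ne_zero.mpr (ne_of_lt hcos))
    exact (mul_eq_zero.mp h1).resolve_left h2
  have hB0 : B = 0 := by
    have h1 : a * Real.sin β₀ * B = 0 := by
      rw [hA0] at hgβ; simpa using hgβ
    have h2 : a * Real.sin β₀ ≠ 0 := mul_ne_zero (ne_of_gt ha) (ne_of_gt hsin)
    exact (mul_eq_zero.mp h1).resolve_left h2
  have hgβ' : a' * (Real.cos β₀ - 1) * C - a' * Real.sin β₀ * B = 0 := hz1'
  have hC0 : C = 0 := by
    rw [hB0, mul_zero, sub_zero] at hgβ'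
    have h1 : a' * (Real.cos β₀ - 1) * C = 0 := hgβ'
    have h2 : a' * (Real.cos β₀ - 1) ≠ 0 :=
      mul_ne_zero (ne_of_gt ha') (sub_ne_zero.mpr (ne_of_lt hcos))
    exact (mul_eq_zero.mp h1).resolve_left h2
  -- translate to orthogonality against p+q, p−q, p×q
  have hnadd : (‖p + q‖ : ℝ)⁻¹ ≠ 0 := inv_ne_zero (norm_ne_zero_iff.mpr hpq_add)
  have hnsub : (‖p - q‖ : ℝ)⁻¹ ≠ 0 := inv_ne_zero (norm_ne_zero_iff.mpr hpq_sub)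
  have hncross : (‖cross3 p q‖ : ℝ)⁻¹ ≠ 0 := inv_ne_zero (norm_ne_zero_iff.mpr hcross)
  have hvadd : ⟪v, p + q⟫ = 0 := by
    have : A = ‖p + q‖⁻¹ * ⟪v, p + q⟫ := by
      rw [hA, v1, ← hpdef, ← hqdef, real_inner_smul_right]
    rw [hA0] at this
    exact ((mul_eq_zero.mp this.symm).resolve_left hnadd)
  have hvsub : ⟪v, p - q⟫ = 0 := by
    have : C = ‖p - q‖⁻¹ * ⟪v, p - q⟫ := by
      rw [hC, v3, ← hpdef, ← hqdef, real_inner_smul_right]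
    rw [hC0] at this
    exact ((mul_eq_zero.mp this.symm).resolve_left hnsub)
  have hvcross : ⟪v, cross3 p q⟫ = 0 := by
    have : B = ‖cross3 p q‖⁻¹ * ⟪v, cross3 p q⟫ := by
      rw [hB, v2, ← hpdef, ← hqdef, real_inner_smul_right]
    rw [hB0] at this
    exact ((mul_eq_zero.mp this.symm).resolve_left hncross)
  have hvp : ⟪v, p⟫ = 0 := by
    have h1 := hvadd
    have h2 := hvsub
    rw [inner_add_right] at h1
    rw [inner_sub_right] at h2
    linarith
  have hvq : ⟪v, q⟫ = 0 := by
    have h1 := hvadd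
    have h2 := hvsub
    rw [inner_add_right] at h1
    rw [inner_sub_right] at h2
    linarith
  -- conclude
  have hdp : (v : Fin 3 → ℝ) ⬝ᵥ p = 0 := by rw [← inner_eq_dot]; exact hvp
  have hdq : (v : Fin 3 → ℝ) ⬝ᵥ q = 0 := by rw [← inner_eq_dot]; exact hvq
  have hdc : (v : Fin 3 → ℝ) ⬝ᵥ (crossProduct (p : Fin 3 → ℝ) q) = 0 := by
    rw [← inner_eq_dot]; exact hvcross
  have hcne : crossProduct (p : Fin 3 → ℝ) q ≠ 0 := fun h => hcross (by simp [cross3, h])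
  have hv0 := vanish_of_perp v p q hdp hdq hdc hcne
  simpa using congrArg (WithLp.toLp 2) hv0
end
end

section
/- Let k0 > 0 and v ∈ ℝ³. If there exists a nonempty open set A ⊆ B such that e^{i⟨v, h(k)⟩} = 1 for all k ∈ A, then v = 0. (This expresses the uniqueness in Theorem 5.3(ii): when R_s·e3 = ±R_t·e3, the relative translation R_sᵀR_t·d_t − d_s is uniquely determined by the phase relation on the hemisphere.) -/
noncomputable section
open Real Set MeasureTheory
open scoped RealInnerProductSpace

/-!
The phase `⟪v, h k⟫` is continuous and takes values in `2πℤ` on `A`, so it is constant on a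
ball `B(a, r) ⊆ A`. Writing `v = (w, c)`, the function `k ↦ ⟪w, k⟫ + c κ(k)` is then constant
there. Its second difference at `a` in any direction `d` is `c (κ(a+d) + κ(a-d) - 2κ(a))`, and
`κ` is strictly concave, so `c = 0`; then `⟪w, d⟫ = 0` for all small `d`, so `w = 0`.
-/

open Complex in
theorem IsPreconnected.eq_of_cexp_I_mul_eq_one {X : Type*} [TopologicalSpace X] {S : Set X}
    (hS : IsPreconnected S) {f : X → ℝ} (hf : ContinuousOn f S)
    (h1 : ∀ x ∈ S, exp (I * f x) = 1) {x y : X} (hx : x ∈ S) (hy : y ∈ S) : f x = f y := by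
  have hdisc : IsDiscrete (AddSubgroup.zmultiples (2 * π) : Set ℝ) :=
    isDiscrete_iff_discreteTopology.mpr
      (inferInstanceAs (DiscreteTopology (AddSubgroup.zmultiples (2 * π))))
  refine hS.constant_of_mapsTo hdisc hf (fun z hz => ?_) hx hy
  have hz1 : Circle.exp (f z) = 1 := Circle.coe_inj.mp <| by simpa [mul_comm] using h1 z hz
  obtain ⟨n, hn⟩ := Circle.exp_eq_one.mp hz1
  exact ⟨n, by simp [hn]⟩

lemma inner_hmap (k0 : ℝ) (v : R3) (k : R2) :
    ⟪v, hmap k0 k⟫ = ⟪!₂[v 0, v 1], k⟫ + v 2 * (kappa k0 k - k0) := by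
  simp only [hmap, PiLp.inner_apply, RCLike.inner_apply, conj_trivial, Fin.sum_univ_three,
    Fin.sum_univ_two, Matrix.cons_val_zero, Matrix.cons_val_one, Matrix.cons_val,
    Matrix.cons_val_fin_one]
  ring

lemma continuous_kappa (k0 : ℝ) : Continuous (kappa k0) := by
  unfold kappa; fun_prop

lemma continuous_inner_hmap (k0 : ℝ) (v : R3) : Continuous fun k : R2 => ⟪v, hmap k0 k⟫ := by
  simp only [inner_hmap]
  have := continuous_kappa k0
  fun_prop

lemma kappa_add_add_kappa_sub_lt {k0 : ℝ} {a d : R2} (hd : d ≠ 0) (hp : a + d ∈ ball2 k0)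
    (hm : a - d ∈ ball2 k0) : kappa k0 (a + d) + kappa k0 (a - d) < 2 * kappa k0 a := by
  simp only [ball2, mem_ofPred_eq] at hp hm
  have ha : ‖a‖ < k0 := by
    have := norm_add_le (a + d) (a - d)
    rw [show a + d + (a - d) = (2 : ℝ) • a by module, norm_smul, Real.norm_two] at this
    linarith
  have hpar : ‖a + d‖ ^ 2 + ‖a - d‖ ^ 2 = 2 * ‖a‖ ^ 2 + 2 * ‖d‖ ^ 2 := by
    rw [norm_add_sq_real, norm_sub_sq_real]; ring
  have hd2 : 0 < ‖d‖ := norm_pos_iff.mpr hd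
  have nA : 0 ≤ k0 ^ 2 - ‖a + d‖ ^ 2 := by nlinarith [norm_nonneg (a + d)]
  have nB : 0 ≤ k0 ^ 2 - ‖a - d‖ ^ 2 := by nlinarith [norm_nonneg (a - d)]
  have nM : 0 ≤ k0 ^ 2 - ‖a‖ ^ 2 := by nlinarith [norm_nonneg a]
  -- with `A, B, M` the radicands at `a + d, a - d, a`: `(√A + √B)² ≤ 2 (A + B) = 4 (M - ‖d‖²)`
  unfold kappa
  apply lt_of_pow_lt_pow_left₀ 2 (by positivity)
  nlinarith [sq_nonneg (√(k0 ^ 2 - ‖a + d‖ ^ 2) - √(k0 ^ 2 - ‖a - d‖ ^ 2)),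
    Real.sq_sqrt nA, Real.sq_sqrt nB, Real.sq_sqrt nM]

lemma eq_zero_of_inner_add_mul_kappa_eqOn {k0 c r : ℝ} {w a : R2} (hr : 0 < r)
    (hball : Metric.ball a r ⊆ ball2 k0)
    (hconst : ∀ k ∈ Metric.ball a r, ⟪w, k⟫ + c * kappa k0 k = ⟪w, a⟫ + c * kappa k0 a) :
    w = 0 ∧ c = 0 := by
  have hmem : ∀ d : R2, ‖d‖ < r → a + d ∈ Metric.ball a r := fun d hd => by
    simpa [mem_ball_iff_norm] using hd
  have hdiff : ∀ d : R2, ‖d‖ < r → ⟪w, d⟫ + c * (kappa k0 (a + d) - kappa k0 a) = 0 := by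
    intro d hd
    have := hconst _ (hmem d hd)
    rw [inner_add_right] at this
    linarith
  have hc : c = 0 := by
    obtain ⟨d, hd⟩ := exists_norm_eq R2 (half_pos hr).le
    have hd0 : d ≠ 0 := norm_ne_zero_iff.mp (by linarith)
    have hlt : ‖d‖ < r := by linarith
    have hconc := kappa_add_add_kappa_sub_lt hd0 (hball (hmem d hlt))
      (by simpa [sub_eq_add_neg] using hball (hmem (-d) (by simpa using hlt)))
    have h1 := hdiff d hlt
    have h2 := hdiff (-d) (by simpa using hlt)
    rw [inner_neg_right, ← sub_eq_add_neg] at h2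
    have : c * (kappa k0 (a + d) + kappa k0 (a - d) - 2 * kappa k0 a) = 0 := by linarith
    exact (mul_eq_zero.mp this).resolve_right (sub_neg.mpr hconc).ne
  refine ⟨?_, hc⟩
  set t := r / (2 * (‖w‖ + 1))
  have ht : 0 < t := by positivity
  have htw : ‖t • w‖ < r := by
    rw [norm_smul, Real.norm_of_nonneg ht.le, div_mul_eq_mul_div, div_lt_iff₀ (by positivity)]
    nlinarith [norm_nonneg w]
  have := hdiff (t • w) htw
  rw [hc, inner_smul_right, real_inner_self_eq_norm_sq] at this
  simpa [ht.ne'] using this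

theorem translation_uniqueness_degenerate_general (k0 : ℝ) (v : R3)
    (A : Set R2) (hA : IsOpen A) (hAne : A.Nonempty) (hAB : A ⊆ ball2 k0)
    (hphase : ∀ k ∈ A, Complex.exp (Complex.I * (⟪v, hmap k0 k⟫ : ℝ)) = 1) :
    v = 0 := by
  obtain ⟨a, ha⟩ := hAne
  obtain ⟨r, hr, hball⟩ := Metric.isOpen_iff.mp hA a ha
  have hconst : ∀ k ∈ Metric.ball a r, ⟪v, hmap k0 k⟫ = ⟪v, hmap k0 a⟫ := fun k hk =>
    (convex_ball a r).isPreconnected.eq_of_cexp_I_mul_eq_one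
      (continuous_inner_hmap k0 v).continuousOn (fun k hk => hphase k (hball hk))
      hk (Metric.mem_ball_self hr)
  obtain ⟨hw, hv2⟩ := eq_zero_of_inner_add_mul_kappa_eqOn (w := !₂[v 0, v 1]) (c := v 2) hr
    (hball.trans hAB) fun k hk => by
    have := hconst k hk
    rw [inner_hmap, inner_hmap] at this
    linarith
  have hv0 : v 0 = 0 := by simpa using congrArg (· 0) hw
  have hv1 : v 1 = 0 := by simpa using congrArg (· 1) hw
  ext i
  fin_cases i <;> simpa

/-- uniqueness of the relative translation, degenerate case.
If `e^{i⟨v, h(k)⟩} = 1` for all `k` in a nonempty open subset `A` of the disk `B`, then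
`v = 0`. -/
theorem translation_uniqueness_degenerate (k0 : ℝ) (hk0 : 0 < k0) (v : R3)
    (A : Set R2) (hA : IsOpen A) (hAne : A.Nonempty) (hAB : A ⊆ ball2 k0)
    (hphase : ∀ k ∈ A, Complex.exp (Complex.I * (⟪v, hmap k0 k⟫ : ℝ)) = 1) :
    v = 0 :=
  translation_uniqueness_degenerate_general k0 v A hA hAne hAB hphase
end
end

section
/- Let k0 > 0, f : ℝ³ → ℝ be integrable, and R_s, R_t ∈ SO(3) with R_s·e3 ≠ R_t·e3 and R_s·e3 ≠ −R_t·e3; write ν̃_s = ν_{R_s} ∘ τ^{−1} and ν̃_t = ν_{R_t} ∘ τ^{−1}. Suppose there exist exactly one b ∈ (0,∞) and exactly one pair of positively oriented orthonormal bases (w₁¹, w₁²) and (w₂¹, w₂²) of ℝ² such that, with the straight lines Γ_ℓ(ξ) = −b·w_ℓ¹ + ξ·w_ℓ² and Γ*_ℓ(ξ) = (k0²/b)·w_ℓ¹ − ξ·w_ℓ² for ℓ ∈ {1,2}, one has ν̃_s(Γ₁(ξ)) = ν̃_t(Γ₂(−ξ)) for all ξ ∈ ℝ with ξ² > k0² −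 b², and ν̃_s(Γ*₁(ξ)) = ν̃_t(Γ*₂(ξ)) for all ξ ∈ ℝ with ξ² > k0² − k0⁴/b². Then, writing w₁¹ = (cos φ₁, sin φ₁) and w₂¹ = (cos φ₂, sin φ₂), one has R_sᵀR_t = Q³(φ₁)·Q²(2·arctan(b/k0))·Q³(π − φ₂). -/
noncomputable section
open Real Set MeasureTheory
open scoped RealInnerProductSpace

/-- Inverse of `τ`: `τ⁻¹(y) = (2k0²/(k0² + ‖y‖²))·y`. -/
def tauInv (k0 : ℝ) (y : R2) : R2 := (2 * k0 ^ 2 / (k0 ^ 2 + ‖y‖ ^ 2)) • y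

/-- The transformed scaled squared energy `ν̃_R = ν_R ∘ τ⁻¹`. -/
def nuT (k0 : ℝ) (f : R3 → ℝ) (R : Mat3) (y : R2) : ℝ := nu k0 f R (tauInv k0 y)

/-- `(w¹, w²)` is a positively oriented orthonormal basis of `ℝ²`. -/
def posONB (w1 w2 : R2) : Prop :=
  ‖w1‖ = 1 ∧ ‖w2‖ = 1 ∧ ⟪w1, w2⟫ = 0 ∧ w1 0 * w2 1 - w1 1 * w2 0 = 1

/-- The common line matching property of Theorem A.3 for the parameter `b` and the pair of
positively oriented orthonormal bases `(w₁¹, w₁²)`, `(w₂¹, w₂²)` of `ℝ²`, along the straight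
lines `Γ_ℓ(ξ) = −b·w_ℓ¹ + ξ·w_ℓ²` and `Γ*_ℓ(ξ) = (k0²/b)·w_ℓ¹ − ξ·w_ℓ²`. -/
def lineMatchProp (k0 : ℝ) (f : R3 → ℝ) (Rs Rt : Mat3)
    (q : ℝ × (R2 × R2) × (R2 × R2)) : Prop :=
  0 < q.1 ∧ posONB q.2.1.1 q.2.1.2 ∧ posONB q.2.2.1 q.2.2.2 ∧
  (∀ ξ : ℝ, ξ ^ 2 > k0 ^ 2 - q.1 ^ 2 →
    nuT k0 f Rs ((-q.1) • q.2.1.1 + ξ • q.2.1.2)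
      = nuT k0 f Rt ((-q.1) • q.2.2.1 + (-ξ) • q.2.2.2)) ∧
  (∀ ξ : ℝ, ξ ^ 2 > k0 ^ 2 - k0 ^ 4 / q.1 ^ 2 →
    nuT k0 f Rs ((k0 ^ 2 / q.1) • q.2.1.1 - ξ • q.2.1.2)
      = nuT k0 f Rt ((k0 ^ 2 / q.1) • q.2.2.1 - ξ • q.2.2.2))

/-!
Put `M = Rsᵀ Rt`. Since `Rs e₃ ≠ ±Rt e₃`, the entry `M₂₂ = ⟨Rs e₃, Rt e₃⟩` has modulus `< 1`, so
`M` has Euler angles `M = Q³(p₁) Q²(α) Q³(π - p₂)` with `α = 2 arctan t`, `t > 0`. The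
hemisphere point `h(τ⁻¹ y)` is a positive multiple of `(y, -k0)`, and in the frames rotated by
`p₁`, `p₂` the lines `Γ_ℓ`, `Γ*_ℓ` for `b = k0 t` lift to lines at height `-k0` on which
`Q²(α)` acts by `(b, ξ, -k0) ↦ (-b, ξ, -k0)` and `(-k0²/b, ξ, -k0) ↦ (-k0²/b, ξ, k0)`. Hence
`Rs h(τ⁻¹ Γ₁(ξ)) = Rt h(τ⁻¹ Γ₂(-ξ))` and `Rs h(τ⁻¹ Γ*₁(ξ)) = -Rt h(τ⁻¹ Γ*₂(ξ))`; as
`|𝓕f(-x)| = |𝓕f(x)|` for real `f`, the triple `(k0 t, frame p₁, frame p₂)` has the matching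
property, and uniqueness identifies it with `(b, (w₁¹, w₁²), (w₂¹, w₂²))`.
-/

open scoped Matrix

lemma exists_polar_of_sq_add_sq {x y r : ℝ} (h : x ^ 2 + y ^ 2 = r ^ 2) (hr : 0 ≤ r) :
    ∃ θ, x = r * cos θ ∧ y = r * sin θ := by
  have hz : ‖(⟨x, y⟩ : ℂ)‖ = r := by
    rw [Complex.norm_def, Complex.normSq_mk, ← sq, ← sq, h, Real.sqrt_sq hr]
  refine ⟨Complex.arg ⟨x, y⟩, ?_, ?_⟩
  · simpa [hz] using (Complex.norm_mul_cos_arg ⟨x, y⟩).symm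
  · simpa [hz] using (Complex.norm_mul_sin_arg ⟨x, y⟩).symm

lemma cos_two_mul_arctan (t : ℝ) : cos (2 * arctan t) = (1 - t ^ 2) / (1 + t ^ 2) := by
  rw [cos_two_mul, cos_sq_arctan]
  field_simp
  ring

lemma sin_two_mul_arctan (t : ℝ) : sin (2 * arctan t) = 2 * t / (1 + t ^ 2) := by
  have h : √(1 + t ^ 2) ^ 2 = 1 + t ^ 2 := Real.sq_sqrt (by positivity)
  rw [sin_two_mul, sin_arctan, cos_arctan]
  field_simp
  rw [h]

lemma exists_eq_two_mul_arctan {α : ℝ} (hα : α ∈ Ioo 0 π) : ∃ t, 0 < t ∧ α = 2 * arctan t := by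
  refine ⟨tan (α / 2), tan_pos_of_pos_of_lt_pi_div_two (by linarith [hα.1]) (by linarith [hα.2]),
    ?_⟩
  rw [arctan_tan (by linarith [hα.1, pi_pos]) (by linarith [hα.2])]
  ring

lemma sq_real_inner_lt_one {E : Type*} [NormedAddCommGroup E] [InnerProductSpace ℝ E] {u v : E}
    (hu : ‖u‖ = 1) (hv : ‖v‖ = 1) (h : u ≠ v) (h' : u ≠ -v) : ⟪u, v⟫ ^ 2 < 1 := by
  rw [sq_lt_one_iff_abs_lt_one]
  refine ((abs_real_inner_le_norm u v).trans_eq (by rw [hu, hv, one_mul])).lt_of_ne fun habs => ?_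
  rcases abs_eq zero_le_one |>.mp habs with h1 | h1
  · exact h ((inner_eq_one_iff_of_norm_eq_one hu hv).mp h1)
  · exact h' ((inner_eq_neg_one_iff_of_norm_eq_one hu hv).mp h1)

lemma SO3.mul_transpose_self {R : Mat3} (h : SO3 R) : R * R.transpose = 1 :=
  mul_eq_one_comm.mp h.1

lemma SO3.mul {A B : Mat3} (hA : SO3 A) (hB : SO3 B) : SO3 (A * B) := by
  refine ⟨?_, by rw [Matrix.det_mul, hA.2, hB.2, one_mul]⟩
  rw [Matrix.transpose_mul, Matrix.mul_assoc, ← Matrix.mul_assoc A.transpose, hA.1,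
    Matrix.one_mul, hB.1]

lemma SO3.transpose {A : Mat3} (hA : SO3 A) : SO3 A.transpose :=
  ⟨by rw [Matrix.transpose_transpose, hA.mul_transpose_self], by rw [Matrix.det_transpose, hA.2]⟩

lemma inner_rotE3 (A B : Mat3) : ⟪rotE3 A, rotE3 B⟫ = (A.transpose * B) 2 2 := by
  simp [rotE3, act3, e3, EuclideanSpace.inner_eq_star_dotProduct, Matrix.mul_apply,
    Fin.sum_univ_three, Matrix.mulVec, dotProduct]
  ring

lemma SO3.norm_rotE3 {R : Mat3} (h : SO3 R) : ‖rotE3 R‖ = 1 := by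
  have := inner_rotE3 R R
  rw [h.1, real_inner_self_eq_norm_sq, Matrix.one_apply_eq] at this
  exact (pow_eq_one_iff_of_nonneg (norm_nonneg _) two_ne_zero).mp this

lemma Q3mat_add (a b : ℝ) : Q3mat a * Q3mat b = Q3mat (a + b) := by
  ext i j
  fin_cases i <;> fin_cases j <;>
    simp [Q3mat, Matrix.mul_apply, Fin.sum_univ_three, cos_add, sin_add] <;> ring

lemma Q3mat_zero : Q3mat 0 = 1 := by
  ext i j; fin_cases i <;> fin_cases j <;> simp [Q3mat]

lemma Q3mat_transpose (a : ℝ) : (Q3mat a).transpose = Q3mat (-a) := by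
  ext i j; fin_cases i <;> fin_cases j <;> simp [Q3mat]

lemma SO3_Q3mat (a : ℝ) : SO3 (Q3mat a) := by
  refine ⟨by rw [Q3mat_transpose, Q3mat_add, neg_add_cancel, Q3mat_zero], ?_⟩
  simp [Q3mat, Matrix.det_fin_three, ← sq]

lemma Q3mat_pi_mulVec (x y z : ℝ) : Q3mat π *ᵥ ![x, y, z] = ![-x, -y, z] := by
  ext i; fin_cases i <;> simp [Q3mat, Matrix.mulVec, dotProduct, Fin.sum_univ_three]

lemma Q2mat_two_arctan_mulVec_Gamma (k0 t ξ : ℝ) :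
    Q2mat (2 * arctan t) *ᵥ ![k0 * t, ξ, -k0] = ![-(k0 * t), ξ, -k0] := by
  have ht : 1 + t ^ 2 ≠ 0 := by positivity
  ext i; fin_cases i <;>
    simp [Q2mat, Matrix.mulVec, dotProduct, Fin.sum_univ_three, cos_two_mul_arctan,
      sin_two_mul_arctan] <;> field_simp <;> ring

lemma Q2mat_two_arctan_mulVec_GammaStar (k0 ξ : ℝ) {t : ℝ} (ht : t ≠ 0) :
    Q2mat (2 * arctan t) *ᵥ ![-(k0 / t), ξ, -k0] = ![-(k0 / t), ξ, k0] := by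
  have ht' : 1 + t ^ 2 ≠ 0 := by positivity
  ext i; fin_cases i <;>
    simp [Q2mat, Matrix.mulVec, dotProduct, Fin.sum_univ_three, cos_two_mul_arctan,
      sin_two_mul_arctan] <;> field_simp <;> ring

lemma eq_Q2mat_of_SO3 {N : Mat3} (hN : SO3 N) {α : ℝ} (hα : sin α ≠ 0)
    (h02 : N 0 2 = sin α) (h12 : N 1 2 = 0) (h20 : N 2 0 = -sin α) (h21 : N 2 1 = 0)
    (h22 : N 2 2 = cos α) : N = Q2mat α := by
  have col : ∀ i j, N 0 i * N 0 j + N 1 i * N 1 j + N 2 i * N 2 j = (1 : Mat3) i j := by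
    intro i j; rw [← hN.1]; simp [Matrix.mul_apply, Fin.sum_univ_three]
  have row : ∀ i j, N i 0 * N j 0 + N i 1 * N j 1 + N i 2 * N j 2 = (1 : Mat3) i j := by
    intro i j; rw [← hN.mul_transpose_self]; simp [Matrix.mul_apply, Fin.sum_univ_three]
  have h10 : N 1 0 = 0 := by
    have := row 1 2; simp [h12, h20, h21] at this; tauto
  have h01 : N 0 1 = 0 := by
    have := col 1 2; simp [h02, h12, h21] at this; tauto
  have h00 : N 0 0 = cos α := by
    have := col 0 2
    simp only [h02, h12, h20, h22, Matrix.one_apply_ne (by decide : (0 : Fin 3) ≠ 2)] at this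
    exact mul_right_cancel₀ hα (by linear_combination this)
  have h11 : N 1 1 = 1 := by
    have := hN.2
    rw [Matrix.det_fin_three, h00, h01, h02, h10, h12, h20, h21, h22] at this
    linear_combination this - N 1 1 * sin_sq_add_cos_sq α
  ext i j
  fin_cases i <;> fin_cases j <;> simp [Q2mat, h00, h01, h02, h10, h11, h12, h20, h21, h22]

lemma exists_Q3mat_Q2mat_Q3mat {M : Mat3} (hM : SO3 M) (h22 : M 2 2 ^ 2 < 1) :
    ∃ p₁ p₂ α, α ∈ Ioo 0 π ∧ M = Q3mat p₁ * Q2mat α * Q3mat (π - p₂) := by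
  set α := arccos (M 2 2)
  have hα : α ∈ Ioo 0 π := by
    constructor
    · exact arccos_pos.mpr (by nlinarith)
    · exact (arccos_le_pi _).lt_of_ne fun h => by nlinarith [arccos_eq_pi.mp h]
  have hs : 0 < sin α := sin_pos_of_pos_of_lt_pi hα.1 hα.2
  have hc : cos α = M 2 2 := cos_arccos (by nlinarith) (by nlinarith)
  have hsc := sin_sq_add_cos_sq α
  obtain ⟨p₁, hM02, hM12⟩ : ∃ p, M 0 2 = sin α * cos p ∧ M 1 2 = sin α * sin p := by
    refine exists_polar_of_sq_add_sq ?_ hs.le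
    have := congrFun (congrFun hM.1 2) 2
    simp [Matrix.mul_apply, Fin.sum_univ_three] at this
    linear_combination this - hsc + (cos α + M 2 2) * hc
  obtain ⟨p₂, hM20, hM21⟩ : ∃ p, M 2 0 = sin α * cos p ∧ M 2 1 = sin α * sin p := by
    refine exists_polar_of_sq_add_sq ?_ hs.le
    have := congrFun (congrFun hM.mul_transpose_self 2) 2
    simp [Matrix.mul_apply, Fin.sum_univ_three] at this
    linear_combination this - hsc + (cos α + M 2 2) * hc
  -- `p₁`, `p₂` are the polar angles of the third column and row of `M`; conjugating by them
  -- leaves a rotation about `e₂`.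
  set N := Q3mat (-p₁) * M * Q3mat (p₂ - π)
  have hMN : M = Q3mat p₁ * N * Q3mat (π - p₂) := by
    simp only [N, ← Matrix.mul_assoc, Q3mat_add, add_neg_cancel, Q3mat_zero, Matrix.one_mul]
    rw [Matrix.mul_assoc, Q3mat_add, sub_add_sub_cancel, sub_self, Q3mat_zero, Matrix.mul_one]
  have hNQ : N = Q2mat α := by
    refine eq_Q2mat_of_SO3 (((SO3_Q3mat _).mul hM).mul (SO3_Q3mat _)) hs.ne'
      ?_ ?_ ?_ ?_ ?_ <;>
      simp only [Matrix.mul_apply, Fin.sum_univ_three] <;>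
      simp [Q3mat, hM02, hM12, hM20, hM21, hc] <;> ring_nf <;> simp only [cos_sq'] <;> ring
  exact ⟨p₁, p₂, α, hα, hNQ ▸ hMN⟩

lemma hmap_tauInv {k0 : ℝ} (hk0 : 0 < k0) {y : R2} (hy : k0 ≤ ‖y‖) :
    hmap k0 (tauInv k0 y)
      = (2 * k0 ^ 2 / (k0 ^ 2 + ‖y‖ ^ 2)) • WithLp.toLp 2 ![y 0, y 1, -k0] := by
  have hd : 0 < k0 ^ 2 + ‖y‖ ^ 2 := by positivity
  have hκ : kappa k0 (tauInv k0 y) = k0 * (‖y‖ ^ 2 - k0 ^ 2) / (k0 ^ 2 + ‖y‖ ^ 2) := by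
    have hnn : 0 ≤ k0 * (‖y‖ ^ 2 - k0 ^ 2) / (k0 ^ 2 + ‖y‖ ^ 2) :=
      div_nonneg (mul_nonneg hk0.le (by nlinarith)) hd.le
    rw [kappa, tauInv, norm_smul, Real.norm_of_nonneg (by positivity), ← Real.sqrt_sq hnn]
    congr 1
    field_simp
    ring
  rw [hmap, hκ]
  ext i
  fin_cases i <;> simp [tauInv]
  field_simp
  ring

lemma FT_neg (f : R3 → ℝ) (y : R3) : FT f (-y) = starRingEnd ℂ (FT f y) := by
  rw [FT, FT, map_mul, ← integral_conj, Complex.conj_ofReal]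
  congr 2 with x
  rw [map_mul, Complex.conj_ofReal, ← Complex.exp_conj, inner_neg_right]
  simp

lemma nuT_eq_of_lift_eq {k0 : ℝ} (hk0 : 0 < k0) (f : R3 → ℝ) {Rs Rt : Mat3}
    (hRs : Rs * Rs.transpose = 1) {y₁ y₂ : R2} (hy : k0 ≤ ‖y₁‖) (hnorm : ‖y₁‖ = ‖y₂‖)
    (h : ![y₁ 0, y₁ 1, -k0] = (Rs.transpose * Rt) *ᵥ ![y₂ 0, y₂ 1, -k0] ∨
      ![y₁ 0, y₁ 1, -k0] = -((Rs.transpose * Rt) *ᵥ ![y₂ 0, y₂ 1, -k0])) :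
    nuT k0 f Rs y₁ = nuT k0 f Rt y₂ := by
  have hRt : ∀ v, Rs *ᵥ ((Rs.transpose * Rt) *ᵥ v) = Rt *ᵥ v := fun v => by
    rw [Matrix.mulVec_mulVec, ← Matrix.mul_assoc, hRs, Matrix.one_mul]
  simp only [nuT, nu, hmap_tauInv hk0 hy, hmap_tauInv hk0 (hnorm ▸ hy), hnorm, act3,
    WithLp.ofLp_smul, Matrix.mulVec_smul]
  rcases h with h | h
  · rw [h, hRt]
  · rw [h, Matrix.mulVec_neg, hRt, smul_neg, WithLp.toLp_neg, FT_neg, Complex.norm_conj]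

def unitVec (θ : ℝ) : R2 := WithLp.toLp 2 ![cos θ, sin θ]

lemma posONB_unitVec (θ : ℝ) : posONB (unitVec θ) (unitVec (θ + π / 2)) := by
  refine ⟨?_, ?_, ?_, ?_⟩ <;>
    simp [unitVec, EuclideanSpace.norm_eq, EuclideanSpace.inner_eq_star_dotProduct,
      cos_add_pi_div_two, sin_add_pi_div_two, Fin.sum_univ_two]
  · ring
  · linear_combination cos_sq_add_sin_sq θ

lemma norm_smul_unitVec_add (x z θ : ℝ) :
    ‖x • unitVec θ + z • unitVec (θ + π / 2)‖ = √(x ^ 2 + z ^ 2) := by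
  rw [EuclideanSpace.norm_eq]
  congr 1
  simp [unitVec, Fin.sum_univ_two, cos_add_pi_div_two, sin_add_pi_div_two]
  linear_combination (x ^ 2 + z ^ 2) * sin_sq_add_cos_sq θ

lemma lift_smul_unitVec_add (x z k0 θ : ℝ) :
    ![(x • unitVec θ + z • unitVec (θ + π / 2)) 0,
      (x • unitVec θ + z • unitVec (θ + π / 2)) 1, -k0] = Q3mat θ *ᵥ ![x, z, -k0] := by
  ext i
  fin_cases i <;> simp [unitVec, Q3mat, cos_add_pi_div_two, sin_add_pi_div_two]

lemma lineMatchProp_of_transpose_mul_eq {k0 : ℝ} (hk0 : 0 < k0) (f : R3 → ℝ) {Rs Rt : Mat3}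
    (hRs : Rs * Rs.transpose = 1) {p₁ p₂ t : ℝ} (ht : 0 < t)
    (hM : Rs.transpose * Rt = Q3mat p₁ * Q2mat (2 * arctan t) * Q3mat (π - p₂)) :
    lineMatchProp k0 f Rs Rt
      (k0 * t, (unitVec p₁, unitVec (p₁ + π / 2)), (unitVec p₂, unitVec (p₂ + π / 2))) := by
  have hrot : ∀ v, (Rs.transpose * Rt) *ᵥ (Q3mat p₂ *ᵥ v)
      = Q3mat p₁ *ᵥ (Q2mat (2 * arctan t) *ᵥ (Q3mat π *ᵥ v)) := fun v => by
    simp only [hM, Matrix.mulVec_mulVec, Matrix.mul_assoc, Q3mat_add, sub_add_cancel]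
  refine ⟨by positivity, posONB_unitVec _, posONB_unitVec _, fun ξ hξ => ?_, fun ξ hξ => ?_⟩
  · refine nuT_eq_of_lift_eq hk0 f hRs ?_ ?_ (Or.inl ?_)
    · rw [norm_smul_unitVec_add]
      exact Real.le_sqrt_of_sq_le (by nlinarith)
    · rw [norm_smul_unitVec_add, norm_smul_unitVec_add, neg_sq, neg_sq]
    · rw [lift_smul_unitVec_add, lift_smul_unitVec_add, hrot, Q3mat_pi_mulVec, neg_neg,
        neg_neg, Q2mat_two_arctan_mulVec_Gamma]
  · have hb : k0 ^ 2 / (k0 * t) = k0 / t := by field_simp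
    simp only [hb, sub_eq_add_neg, ← neg_smul]
    refine nuT_eq_of_lift_eq hk0 f hRs ?_ ?_ (Or.inr ?_)
    · rw [norm_smul_unitVec_add]
      refine Real.le_sqrt_of_sq_le ?_
      have : k0 ^ 4 / (k0 * t) ^ 2 = (k0 / t) ^ 2 := by field_simp
      nlinarith
    · rw [norm_smul_unitVec_add, norm_smul_unitVec_add]
    · rw [lift_smul_unitVec_add, lift_smul_unitVec_add, hrot, Q3mat_pi_mulVec, neg_neg,
        Q2mat_two_arctan_mulVec_GammaStar k0 ξ ht.ne', ← Matrix.mulVec_neg]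
      congr 1
      ext i; fin_cases i <;> simp

theorem reconstruction_stereographic_general (k0 : ℝ) (hk0 : 0 < k0) (f : R3 → ℝ)
    (Rs Rt : Mat3) (hRs : SO3 Rs) (hRt : SO3 Rt)
    (hne : rotE3 Rs ≠ rotE3 Rt) (hne' : rotE3 Rs ≠ -rotE3 Rt)
    (hexu : ∃! q : ℝ × (R2 × R2) × (R2 × R2), lineMatchProp k0 f Rs Rt q)
    (b : ℝ) (w11 w12 w21 w22 : R2)
    (hq : lineMatchProp k0 f Rs Rt (b, (w11, w12), (w21, w22)))
    (φ₁ φ₂ : ℝ)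
    (hw11 : w11 = (![Real.cos φ₁, Real.sin φ₁] : Fin 2 → ℝ))
    (hw21 : w21 = (![Real.cos φ₂, Real.sin φ₂] : Fin 2 → ℝ)) :
    Rs.transpose * Rt
      = Q3mat φ₁ * Q2mat (2 * Real.arctan (b / k0)) * Q3mat (π - φ₂) := by
  have hM : SO3 (Rs.transpose * Rt) := hRs.transpose.mul hRt
  have h22 : (Rs.transpose * Rt) 2 2 ^ 2 < 1 := by
    rw [← inner_rotE3]
    exact sq_real_inner_lt_one hRs.norm_rotE3 hRt.norm_rotE3 hne hne'
  obtain ⟨p₁, p₂, α, hα, hMeq⟩ := exists_Q3mat_Q2mat_Q3mat hM h22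
  obtain ⟨t, ht, rfl⟩ := exists_eq_two_mul_arctan hα
  have huniq :=
    hexu.unique hq (lineMatchProp_of_transpose_mul_eq hk0 f hRs.mul_transpose_self ht hMeq)
  simp only [Prod.mk.injEq] at huniq
  obtain ⟨rfl, ⟨rfl, -⟩, rfl, -⟩ := huniq
  simp only [unitVec, Matrix.vecCons_inj, and_true] at hw11 hw21
  rw [hMeq, mul_div_cancel_left₀ t hk0.ne']
  simp only [Q3mat, cos_pi_sub, sin_pi_sub, hw11.1, hw11.2, hw21.1, hw21.2]

/-- Theorem: reconstruction of the rotation via common lines after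
stereographic projection.  If there is exactly one parameter `b > 0` together with exactly
one pair of positively oriented orthonormal bases matching the transformed data along the
straight lines `Γ_ℓ` and `Γ*_ℓ`, then, writing `w₁¹ = (cos φ₁, sin φ₁)` and
`w₂¹ = (cos φ₂, sin φ₂)`, one has `Rsᵀ Rt = Q³(φ₁)·Q²(2 arctan(b/k0))·Q³(π − φ₂)`. -/
theorem reconstruction_stereographic (k0 : ℝ) (hk0 : 0 < k0) (f : R3 → ℝ)
    (hf : MeasureTheory.Integrable f) (Rs Rt : Mat3) (hRs : SO3 Rs) (hRt : SO3 Rt)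
    (hne : rotE3 Rs ≠ rotE3 Rt) (hne' : rotE3 Rs ≠ -rotE3 Rt)
    (hexu : ∃! q : ℝ × (R2 × R2) × (R2 × R2), lineMatchProp k0 f Rs Rt q)
    (b : ℝ) (w11 w12 w21 w22 : R2)
    (hq : lineMatchProp k0 f Rs Rt (b, (w11, w12), (w21, w22)))
    (φ₁ φ₂ : ℝ)
    (hw11 : w11 = (![Real.cos φ₁, Real.sin φ₁] : Fin 2 → ℝ))
    (hw21 : w21 = (![Real.cos φ₂, Real.sin φ₂] : Fin 2 → ℝ)) :
    Rs.transpose * Rt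
      = Q3mat φ₁ * Q2mat (2 * Real.arctan (b / k0)) * Q3mat (π - φ₂) :=
  reconstruction_stereographic_general k0 hk0 f Rs Rt hRs hRt hne hne' hexu b w11 w12 w21 w22 hq φ₁
    φ₂ hw11 hw21
end
end
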